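/- Let F̂(z) = Mz + G(z) be a lift of a torus map satisfying the expanding-block assumption, with ‖A⁻¹‖ ≤ 1/K for some constant K > 1, and let Φ̂(z) = lim_{n→∞} A^{−n} P(F̂^n(z)). Let ‖G‖₀ := sup_{z∈ℝ^d} ‖G(z)‖. Then for every z ∈ ℝ^d, ‖Φ̂(z) − P z‖ ≤ ‖G‖₀ / (K − 1). -/

import Mathlib

/-!
Write `u n = A⁻ⁿ P(F̂ⁿ z)`. Since `P F̂ = A P + P G`, consecutive terms differ by
`A⁻⁽ⁿ⁺¹⁾ P G(F̂ⁿ z)`, whose norm is at most `‖G‖₀ K⁻⁽ⁿ⁺¹⁾`. Summing the geometric series from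
`u 0 = P z` to the limit `Φ̂ z` gives `‖G‖₀ K⁻¹ / (1 - K⁻¹) = ‖G‖₀ / (K - 1)`.
-/

open Filter Topology

noncomputable section

/-- Reinterpret a vector `Fin d → ℝ` as a point of Euclidean space `ℝ^d`. -/
def toEuc (d : ℕ) (v : Fin d → ℝ) : EuclideanSpace ℝ (Fin d) := WithLp.toLp 2 v

/-- Projection onto the first `k` coordinates of `ℝ^d`. -/
def projP (d k : ℕ) (h : k ≤ d) (z : EuclideanSpace ℝ (Fin d)) :
    EuclideanSpace ℝ (Fin k) :=
  WithLp.toLp 2 (fun i => z (Fin.castLE h i))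

namespace ContinuousLinearEquiv

variable {𝕜 E : Type*}

theorem pow_succ_apply [Semiring 𝕜] [TopologicalSpace E] [AddCommMonoid E] [Module 𝕜 E]
    (B : E ≃L[𝕜] E) (n : ℕ) (x : E) : (B ^ (n + 1)) x = (B ^ n) (B x) := by
  rw [pow_succ]
  rfl

theorem norm_pow_apply_le [NontriviallyNormedField 𝕜] [SeminormedAddCommGroup E]
    [NormedSpace 𝕜 E] (B : E ≃L[𝕜] E) {r : ℝ} (hB : ‖(B : E →L[𝕜] E)‖ ≤ r) (n : ℕ) (x : E) :
    ‖(B ^ n) x‖ ≤ r ^ n * ‖x‖ := by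
  induction n generalizing x with
  | zero => simp only [pow_zero, one_mul]; exact le_rfl
  | succ n ih =>
    have hr : 0 ≤ r := (norm_nonneg _).trans hB
    calc ‖(B ^ (n + 1)) x‖ = ‖(B ^ n) (B x)‖ := by rw [pow_succ_apply]
      _ ≤ r ^ n * ‖B x‖ := ih _
      _ ≤ r ^ n * (r * ‖x‖) := by
        gcongr
        exact ((B : E →L[𝕜] E).le_opNorm x).trans (by gcongr)
      _ = r ^ (n + 1) * ‖x‖ := by ring

theorem symm_pow_apply_iterate_succ_sub {X : Type*} [Ring 𝕜] [TopologicalSpace E]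
    [AddCommGroup E] [Module 𝕜 E] (A : E ≃L[𝕜] E) {f : X → X} {p g : X → E}
    (hp : ∀ x, p (f x) = A (p x) + g x) (x : X) (n : ℕ) :
    (A.symm ^ (n + 1)) (p (f^[n + 1] x)) - (A.symm ^ n) (p (f^[n] x)) =
      (A.symm ^ (n + 1)) (g (f^[n] x)) := by
  rw [Function.iterate_succ_apply', hp, pow_succ_apply, pow_succ_apply, map_add,
    symm_apply_apply, map_add, add_sub_cancel_left]

theorem norm_sub_le_of_tendsto_symm_pow_apply_iterate {X : Type*} [NontriviallyNormedField 𝕜]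
    [NormedAddCommGroup E] [NormedSpace 𝕜 E] (A : E ≃L[𝕜] E) {f : X → X} {p g : X → E}
    (hp : ∀ x, p (f x) = A (p x) + g x) {r C : ℝ} (hA : ‖(A.symm : E →L[𝕜] E)‖ ≤ r)
    (hr : r < 1) (hg : ∀ x, ‖g x‖ ≤ C) {x : X} {φ : E}
    (hφ : Tendsto (fun n => (A.symm ^ n) (p (f^[n] x))) atTop (𝓝 φ)) :
    ‖φ - p x‖ ≤ C * r / (1 - r) := by
  have hr₀ : 0 ≤ r := (norm_nonneg _).trans hA
  have hstep : ∀ n, dist ((A.symm ^ n) (p (f^[n] x))) ((A.symm ^ (n + 1)) (p (f^[n + 1] x)))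
      ≤ C * r * r ^ n := by
    intro n
    rw [dist_comm, dist_eq_norm, symm_pow_apply_iterate_succ_sub A hp]
    calc ‖(A.symm ^ (n + 1)) (g (f^[n] x))‖ ≤ r ^ (n + 1) * ‖g (f^[n] x)‖ :=
          norm_pow_apply_le _ hA _ _
      _ ≤ r ^ (n + 1) * C := by gcongr; exact hg _
      _ = C * r * r ^ n := by ring
  rw [← dist_eq_norm, dist_comm]
  exact dist_le_of_le_geometric_of_tendsto₀ r (C * r) hr hstep hφ

end ContinuousLinearEquiv

theorem projP_add (d k : ℕ) (h : k ≤ d) (a b : EuclideanSpace ℝ (Fin d)) :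
    projP d k h (a + b) = projP d k h a + projP d k h b := rfl

theorem norm_projP_le (d k : ℕ) (h : k ≤ d) (z : EuclideanSpace ℝ (Fin d)) :
    ‖projP d k h z‖ ≤ ‖z‖ := by
  rw [EuclideanSpace.norm_eq, EuclideanSpace.norm_eq]
  gcongr
  calc ∑ i : Fin k, ‖z (Fin.castLEEmb h i)‖ ^ 2
      = ∑ j ∈ Finset.univ.map (Fin.castLEEmb h), ‖z j‖ ^ 2 := by rw [Finset.sum_map]
    _ ≤ ∑ j, ‖z j‖ ^ 2 := Finset.sum_le_univ_sum_of_nonneg fun _ => by positivity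

theorem stmt3_general (d k : ℕ) (hkd : k ≤ d)
    (M : Matrix (Fin d) (Fin d) ℝ)
    (G : EuclideanSpace ℝ (Fin d) → EuclideanSpace ℝ (Fin d))
    (hGbdd : ∃ C, ∀ z, ‖G z‖ ≤ C)
    (F : EuclideanSpace ℝ (Fin d) → EuclideanSpace ℝ (Fin d))
    (hF : ∀ z, F z = toEuc d (M.mulVec z) + G z)
    (A : EuclideanSpace ℝ (Fin k) ≃L[ℝ] EuclideanSpace ℝ (Fin k))
    (hPM : ∀ z : EuclideanSpace ℝ (Fin d),
      projP d k hkd (toEuc d (M.mulVec z)) = A (projP d k hkd z))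
    (K : ℝ) (hK : 1 < K)
    (hAK : ‖(A.symm : EuclideanSpace ℝ (Fin k) →L[ℝ] EuclideanSpace ℝ (Fin k))‖ ≤ 1 / K)
    (Φ : EuclideanSpace ℝ (Fin d) → EuclideanSpace ℝ (Fin k))
    (hΦ : ∀ z, Tendsto (fun n : ℕ => (A.symm ^ n) (projP d k hkd (F^[n] z)))
      atTop (𝓝 (Φ z))) :
    ∀ z : EuclideanSpace ℝ (Fin d),
      ‖Φ z - projP d k hkd z‖ ≤ (⨆ w : EuclideanSpace ℝ (Fin d), ‖G w‖) / (K - 1) := by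
  intro z
  set C := ⨆ w : EuclideanSpace ℝ (Fin d), ‖G w‖
  have hPF : ∀ w, projP d k hkd (F w) = A (projP d k hkd w) + projP d k hkd (G w) := by
    intro w
    rw [hF, projP_add, hPM]
  have hPG : ∀ w, ‖projP d k hkd (G w)‖ ≤ C := by
    obtain ⟨C₀, hC₀⟩ := hGbdd
    exact fun w => (norm_projP_le d k hkd _).trans
      (le_ciSup (f := fun w => ‖G w‖) ⟨C₀, by rintro _ ⟨v, rfl⟩; exact hC₀ v⟩ w)
  have hK₁ : 1 / K < 1 := (div_lt_one (by linarith)).2 hK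
  calc ‖Φ z - projP d k hkd z‖ ≤ C * (1 / K) / (1 - 1 / K) :=
        A.norm_sub_le_of_tendsto_symm_pow_apply_iterate hPF hAK hK₁ hPG (hΦ z)
    _ = C / (K - 1) := by
        have : K ≠ 0 := by positivity
        field_simp

/--
Let `F̂(z) = Mz + G(z)` be a lift of a torus map satisfying the
expanding-block assumption, with `‖A⁻¹‖ ≤ 1/K` for some constant `K > 1`, and let
`Φ̂(z) = lim_{n→∞} A⁻ⁿ P(F̂ⁿ(z))`. Let `‖G‖₀ := sup_{z} ‖G(z)‖`. Then for every `z ∈ ℝ^d`,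
`‖Φ̂(z) − P z‖ ≤ ‖G‖₀ / (K − 1)`.
-/
theorem stmt3 (d k : ℕ) (hk : 1 ≤ k) (hkd : k ≤ d)
    (M : Matrix (Fin d) (Fin d) ℝ) (hMint : ∀ i j, ∃ n : ℤ, M i j = (n : ℝ))
    (G : EuclideanSpace ℝ (Fin d) → EuclideanSpace ℝ (Fin d))
    (hGcont : Continuous G) (hGbdd : ∃ C, ∀ z, ‖G z‖ ≤ C)
    (hGper : ∀ (z : EuclideanSpace ℝ (Fin d)) (p : Fin d → ℤ),
      G (z + toEuc d fun i => (p i : ℝ)) = G z)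
    (F : EuclideanSpace ℝ (Fin d) → EuclideanSpace ℝ (Fin d))
    (hF : ∀ z, F z = toEuc d (M.mulVec z) + G z)
    (A : EuclideanSpace ℝ (Fin k) ≃L[ℝ] EuclideanSpace ℝ (Fin k))
    (hPM : ∀ z : EuclideanSpace ℝ (Fin d),
      projP d k hkd (toEuc d (M.mulVec z)) = A (projP d k hkd z))
    (hA : ‖(A.symm : EuclideanSpace ℝ (Fin k) →L[ℝ] EuclideanSpace ℝ (Fin k))‖ < 1)
    (K : ℝ) (hK : 1 < K)
    (hAK : ‖(A.symm : EuclideanSpace ℝ (Fin k) →L[ℝ] EuclideanSpace ℝ (Fin k))‖ ≤ 1 / K)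
    (Φ : EuclideanSpace ℝ (Fin d) → EuclideanSpace ℝ (Fin k))
    (hΦ : ∀ z, Tendsto (fun n : ℕ => (A.symm ^ n) (projP d k hkd (F^[n] z)))
      atTop (𝓝 (Φ z))) :
    ∀ z : EuclideanSpace ℝ (Fin d),
      ‖Φ z - projP d k hkd z‖ ≤ (⨆ w : EuclideanSpace ℝ (Fin d), ‖G w‖) / (K - 1) :=
  stmt3_general d k hkd M G hGbdd F hF A hPM K hK hAK Φ hΦ
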